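/- For every integer d ≥ 1 there exists a closed walk p₀, p₁, …, p_{8d} in the grid ℤ² with p₀ = p_{8d} = (0, d), such that consecutive points are at ℓ1 distance exactly 1 from each other, and such that the set of points visited by the walk consists of exactly 8d distinct cells, namely: all 4d cells at ℓ1 distance exactly d from the origin, together with all cells at ℓ1 distance exactly d+1 from the origin except the four axis cells (0, d+1), (0, -(d+1)), (d+1, 0), and (-(d+1), 0). -/
import Mathlib

/-- The explicit rectangle-search walk: four zigzag segments around the diamond
of radius `d`, interleaving cells at distance `d` with cells at distance `d+1`. -/
def wp (d i : ℕ) : ℤ × ℤ :=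
  if i ≤ 2*d then
    (((i/2 + i%2 : ℕ) : ℤ), (d : ℤ) - ((i/2 : ℕ) : ℤ))
  else if i ≤ 4*d then
    ((d : ℤ) - (((i-2*d)/2 : ℕ) : ℤ), -((((i-2*d)/2 + (i-2*d)%2 : ℕ)) : ℤ))
  else if i ≤ 6*d then
    (-((((i-4*d)/2 + (i-4*d)%2 : ℕ)) : ℤ), (((i-4*d)/2 : ℕ) : ℤ) - (d : ℤ))
  else
    ((((i-6*d)/2 : ℕ) : ℤ) - (d : ℤ), (((i-6*d)/2 + (i-6*d)%2 : ℕ) : ℤ))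

lemma wp_seg1 (d i : ℕ) (h : i ≤ 2*d) :
    wp d i = (((i/2 + i%2 : ℕ) : ℤ), (d : ℤ) - ((i/2 : ℕ) : ℤ)) := by
  rw [wp, if_pos h]

lemma wp_seg2 (d i : ℕ) (h1 : 2*d ≤ i) (h2 : i ≤ 4*d) :
    wp d i = ((d : ℤ) - (((i-2*d)/2 : ℕ) : ℤ), -((((i-2*d)/2 + (i-2*d)%2 : ℕ)) : ℤ)) := by
  rcases eq_or_lt_of_le h1 with h | h
  · rw [wp_seg1 d i (by omega), Prod.mk.injEq]; omega
  · rw [wp, if_neg (by omega), if_pos h2]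

lemma wp_seg3 (d i : ℕ) (hd : 1 ≤ d) (h1 : 4*d ≤ i) (h2 : i ≤ 6*d) :
    wp d i = (-((((i-4*d)/2 + (i-4*d)%2 : ℕ)) : ℤ), (((i-4*d)/2 : ℕ) : ℤ) - (d : ℤ)) := by
  rcases eq_or_lt_of_le h1 with h | h
  · rw [wp_seg2 d i (by omega) (by omega), Prod.mk.injEq]; omega
  · rw [wp, if_neg (by omega), if_neg (by omega), if_pos h2]

lemma wp_seg4 (d i : ℕ) (hd : 1 ≤ d) (h1 : 6*d ≤ i) :
    wp d i = ((((i-6*d)/2 : ℕ) : ℤ) - (d : ℤ), (((i-6*d)/2 + (i-6*d)%2 : ℕ) : ℤ)) := by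
  rcases eq_or_lt_of_le h1 with h | h
  · rw [wp_seg3 d i hd (by omega) (by omega), Prod.mk.injEq]; omega
  · rw [wp, if_neg (by omega), if_neg (by omega), if_neg (by omega)]

lemma wp_zero (d : ℕ) (hd : 1 ≤ d) : wp d 0 = ((0:ℤ), (d:ℤ)) := by
  rw [wp_seg1 _ _ (by omega), Prod.mk.injEq]; omega

lemma wp_last (d : ℕ) (hd : 1 ≤ d) : wp d (8*d) = ((0:ℤ), (d:ℤ)) := by
  rw [wp_seg4 _ _ hd (by omega), Prod.mk.injEq]; omega

set_option maxHeartbeats 2000000 in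
/-- For every integer `d ≥ 1` there is a closed walk `p₀, …, p_{8d}` in `ℤ²`
with `p₀ = p_{8d} = (0, d)`, each step moving to an ℓ1-neighbor, whose set of visited
points consists of exactly `8d` distinct cells: all `4d` cells at ℓ1 distance `d` from the
origin together with all cells at ℓ1 distance `d+1` except the four axis cells. -/
theorem rectangle_search_walk (d : ℕ) (hd : 1 ≤ d) :
    ∃ p : ℕ → ℤ × ℤ,
      p 0 = ((0 : ℤ), (d : ℤ)) ∧
      p (8 * d) = ((0 : ℤ), (d : ℤ)) ∧
      (∀ i < 8 * d, |(p (i + 1)).1 - (p i).1| + |(p (i + 1)).2 - (p i).2| = 1) ∧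
      {c : ℤ × ℤ | ∃ i ≤ 8 * d, p i = c} =
        {c : ℤ × ℤ | |c.1| + |c.2| = (d : ℤ)} ∪
          ({c : ℤ × ℤ | |c.1| + |c.2| = (d : ℤ) + 1} \
            {((0 : ℤ), (d : ℤ) + 1), ((0 : ℤ), -((d : ℤ) + 1)),
              ((d : ℤ) + 1, (0 : ℤ)), (-((d : ℤ) + 1), (0 : ℤ))}) ∧
      Set.ncard {c : ℤ × ℤ | ∃ i ≤ 8 * d, p i = c} = 8 * d := by
  refine ⟨wp d, wp_zero d hd, wp_last d hd, ?_, ?_, ?_⟩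
  · -- each step moves to an ℓ1-neighbor
    intro i hi
    simp only [wp]
    split_ifs <;> dsimp only <;> simp only [Int.abs_eq_natAbs] <;> omega
  · -- the set of visited cells is exactly the prescribed set
    ext c
    obtain ⟨x, y⟩ := c
    simp only [Set.mem_setOf_eq, Set.mem_union, Set.mem_diff, Set.mem_insert_iff,
      Set.mem_singleton_iff, Prod.mk.injEq, Int.abs_eq_natAbs]
    constructor
    · rintro ⟨i, hi, hp⟩
      simp only [wp] at hp
      split_ifs at hp <;> rw [Prod.mk.injEq] at hp <;> omega
    · rintro (h | ⟨h, hne⟩)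
      · rcases le_or_gt 1 y with hy | hy
        · rcases le_or_gt 0 x with hx | hx
          · exact ⟨(2*x).toNat, by omega,
              by rw [wp_seg1 _ _ (by omega), Prod.mk.injEq]; omega⟩
          · exact ⟨(6*(d:ℤ) + 2*y).toNat, by omega,
              by rw [wp_seg4 _ _ hd (by omega), Prod.mk.injEq]; omega⟩
        · rcases le_or_gt 1 x with hx | hx
          · exact ⟨(2*(d:ℤ) - 2*y).toNat, by omega,
              by rw [wp_seg2 _ _ (by omega) (by omega), Prod.mk.injEq]; omega⟩
          · exact ⟨(4*(d:ℤ) - 2*x).toNat, by omega,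
              by rw [wp_seg3 _ _ hd (by omega) (by omega), Prod.mk.injEq]; omega⟩
      · rcases le_or_gt 1 y with hy | hy
        · rcases le_or_gt 1 x with hx | hx
          · exact ⟨(2*x - 1).toNat, by omega,
              by rw [wp_seg1 _ _ (by omega), Prod.mk.injEq]; omega⟩
          · exact ⟨(6*(d:ℤ) + 2*y - 1).toNat, by omega,
              by rw [wp_seg4 _ _ hd (by omega), Prod.mk.injEq]; omega⟩
        · rcases le_or_gt 1 x with hx | hx
          · exact ⟨(2*(d:ℤ) - 2*y - 1).toNat, by omega,
              by rw [wp_seg2 _ _ (by omega) (by omega), Prod.mk.injEq]; omega⟩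
          · exact ⟨(4*(d:ℤ) - 2*x - 1).toNat, by omega,
              by rw [wp_seg3 _ _ hd (by omega) (by omega), Prod.mk.injEq]; omega⟩
  · -- exactly `8 d` distinct cells are visited
    have h8 : wp d (8*d) = wp d 0 := by rw [wp_zero d hd, wp_last d hd]
    have himg : {c : ℤ × ℤ | ∃ i ≤ 8 * d, wp d i = c}
        = ↑((Finset.range (8*d)).image (wp d)) := by
      ext c
      simp only [Set.mem_setOf_eq, Finset.coe_image, Set.mem_image, Finset.mem_coe,
        Finset.mem_range]
      constructor
      · rintro ⟨i, hi, rfl⟩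
        rcases lt_or_eq_of_le hi with h | h
        · exact ⟨i, h, rfl⟩
        · exact ⟨0, by omega, by rw [← h8, h]⟩
      · rintro ⟨i, hi, rfl⟩
        exact ⟨i, le_of_lt hi, rfl⟩
    rw [himg, Set.ncard_coe_finset,
      Finset.card_image_of_injOn, Finset.card_range]
    intro i hi j hj hij
    simp only [Finset.mem_coe, Finset.mem_range] at hi hj
    simp only [wp] at hij
    split_ifs at hij <;> rw [Prod.mk.injEq] at hij <;> omega
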